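/- arXiv:2205.10260 — 2 statements merged into one kernel-verified Lean document; each statement's English description precedes it below -/
import Mathlib

section
/- (Geometric Lemma) There exist a finite set Λ ⊂ 𝕊² ∩ ℚ³, for each k ∈ Λ an orthonormal basis (k, k₁, k₂) of ℝ³ with k₁, k₂ ∈ ℚ³, a constant ε_u > 0, and smooth positive functions γ_{(k)} : B_{ε_u}(Id) → ℝ defined on the ball of radius ε_u centered at the identity in the space of 3×3 symmetric matrices, such that for every symmetric S with |S − Id| ≤ ε_u one has S = Σ_{k∈Λ} γ_{(k)}(S)² (k₁ ⊗ k₁). -/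
open scoped RealInnerProductSpace

/-- The 3×3 identity "matrix" as a doubly-indexed family. -/
def idMat3 : Fin 3 → Fin 3 → ℝ := fun i j => if i = j then 1 else 0

/-- The closed ball of radius `ε` around the identity in the space of 3×3 matrices
(with the sup matrix norm), viewed as `Fin 3 → Fin 3 → ℝ`. -/
def matBall (ε : ℝ) : Set (Fin 3 → Fin 3 → ℝ) := {S | ‖S - idMat3‖ ≤ ε}

noncomputable section GeomAux

def Zq : Fin 9 → Fin 3 → ℤ :=
  ![![0,0,5], ![5,0,0], ![0,5,0],
    ![-4,3,0], ![4,3,0],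
    ![0,-4,3], ![0,4,3],
    ![3,0,-4], ![3,0,4]]

def Wz : Fin 9 → Fin 3 → ℤ :=
  ![![5,0,0], ![0,5,0], ![0,0,5],
    ![3,4,0], ![3,-4,0],
    ![0,3,4], ![0,3,-4],
    ![4,0,3], ![4,0,-3]]

def Uz : Fin 9 → Fin 3 → ℤ :=
  ![![0,5,0], ![0,0,5], ![5,0,0],
    ![0,0,5], ![0,0,5],
    ![5,0,0], ![5,0,0],
    ![0,5,0], ![0,5,0]]

def vA : Fin 9 → EuclideanSpace ℝ (Fin 3) := fun m => WithLp.toLp 2 (fun i => ((Zq m i : ℝ)/5))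
def wA : Fin 9 → EuclideanSpace ℝ (Fin 3) := fun m => WithLp.toLp 2 (fun i => ((Wz m i : ℝ)/5))
def uA : Fin 9 → EuclideanSpace ℝ (Fin 3) := fun m => WithLp.toLp 2 (fun i => ((Uz m i : ℝ)/5))

lemma Zq_inj : Function.Injective Zq := by decide

lemma vA_inj : Function.Injective vA := by
  intro a b h
  apply Zq_inj
  funext i
  have h2 := congrArg (fun v => v i) h
  simp only [vA, PiLp.toLp_apply] at h2
  field_simp at h2
  exact_mod_cast h2

lemma vA_ne : ∀ a b : Fin 9, a ≠ b → vA a ≠ vA b := fun a b hab h => hab (vA_inj h)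

open scoped Classical in
def sel (k : EuclideanSpace ℝ (Fin 3)) : Fin 9 :=
  if k = vA 0 then 0 else if k = vA 1 then 1 else if k = vA 2 then 2 else
  if k = vA 3 then 3 else if k = vA 4 then 4 else if k = vA 5 then 5 else
  if k = vA 6 then 6 else if k = vA 7 then 7 else 8

lemma sel_eval (m : Fin 9) : sel (vA m) = m := by
  fin_cases m
  · show sel (vA 0) = 0
    unfold sel
    rw [if_pos rfl]
  · show sel (vA 1) = 1
    unfold sel
    rw [if_neg (vA_ne 1 0 (by decide)), if_pos rfl]
  · show sel (vA 2) = 2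
    unfold sel
    rw [if_neg (vA_ne 2 0 (by decide)), if_neg (vA_ne 2 1 (by decide)), if_pos rfl]
  · show sel (vA 3) = 3
    unfold sel
    rw [if_neg (vA_ne 3 0 (by decide)), if_neg (vA_ne 3 1 (by decide)), if_neg (vA_ne 3 2 (by decide)), if_pos rfl]
  · show sel (vA 4) = 4
    unfold sel
    rw [if_neg (vA_ne 4 0 (by decide)), if_neg (vA_ne 4 1 (by decide)), if_neg (vA_ne 4 2 (by decide)), if_neg (vA_ne 4 3 (by decide)), if_pos rfl]
  · show sel (vA 5) = 5
    unfold sel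
    rw [if_neg (vA_ne 5 0 (by decide)), if_neg (vA_ne 5 1 (by decide)), if_neg (vA_ne 5 2 (by decide)), if_neg (vA_ne 5 3 (by decide)), if_neg (vA_ne 5 4 (by decide)), if_pos rfl]
  · show sel (vA 6) = 6
    unfold sel
    rw [if_neg (vA_ne 6 0 (by decide)), if_neg (vA_ne 6 1 (by decide)), if_neg (vA_ne 6 2 (by decide)), if_neg (vA_ne 6 3 (by decide)), if_neg (vA_ne 6 4 (by decide)), if_neg (vA_ne 6 5 (by decide)), if_pos rfl]
  · show sel (vA 7) = 7
    unfold sel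
    rw [if_neg (vA_ne 7 0 (by decide)), if_neg (vA_ne 7 1 (by decide)), if_neg (vA_ne 7 2 (by decide)), if_neg (vA_ne 7 3 (by decide)), if_neg (vA_ne 7 4 (by decide)), if_neg (vA_ne 7 5 (by decide)), if_neg (vA_ne 7 6 (by decide)), if_pos rfl]
  · show sel (vA 8) = 8
    unfold sel
    rw [if_neg (vA_ne 8 0 (by decide)), if_neg (vA_ne 8 1 (by decide)), if_neg (vA_ne 8 2 (by decide)), if_neg (vA_ne 8 3 (by decide)), if_neg (vA_ne 8 4 (by decide)), if_neg (vA_ne 8 5 (by decide)), if_neg (vA_ne 8 6 (by decide)), if_neg (vA_ne 8 7 (by decide))]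

def cA : Fin 9 → (Fin 3 → Fin 3 → ℝ) → ℝ := fun m S =>
  ![S 0 0 - 1/4, S 1 1 - 1/4, S 2 2 - 1/4,
    1/8 + (25/24) * S 0 1, 1/8 - (25/24) * S 0 1,
    1/8 + (25/24) * S 1 2, 1/8 - (25/24) * S 1 2,
    1/8 + (25/24) * S 0 2, 1/8 - (25/24) * S 0 2] m

lemma entry_bound {S : Fin 3 → Fin 3 → ℝ} (hS : S ∈ matBall (1/100)) (i j : Fin 3) :
    |S i j - idMat3 i j| ≤ 1/100 := by
  have h1 : ‖(S - idMat3) i‖ ≤ ‖S - idMat3‖ := norm_le_pi_norm _ i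
  have h2 : ‖(S - idMat3) i j‖ ≤ ‖(S - idMat3) i‖ := norm_le_pi_norm _ j
  have := le_trans h2 (le_trans h1 hS)
  simpa [Real.norm_eq_abs] using this

lemma cA_pos {S : Fin 3 → Fin 3 → ℝ} (hS : S ∈ matBall (1/100)) (m : Fin 9) :
    0 < cA m S := by
  have h00 : |S 0 0 - 1| ≤ 1/100 := entry_bound hS 0 0
  have h11 : |S 1 1 - 1| ≤ 1/100 := entry_bound hS 1 1
  have h22 : |S 2 2 - 1| ≤ 1/100 := entry_bound hS 2 2
  have h01 : |S 0 1 - 0| ≤ 1/100 := entry_bound hS 0 1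
  have h12 : |S 1 2 - 0| ≤ 1/100 := entry_bound hS 1 2
  have h02 : |S 0 2 - 0| ≤ 1/100 := entry_bound hS 0 2
  rw [abs_le] at h00 h11 h22 h01 h12 h02
  obtain ⟨h00a, h00b⟩ := h00; obtain ⟨h11a, h11b⟩ := h11; obtain ⟨h22a, h22b⟩ := h22
  obtain ⟨h01a, h01b⟩ := h01; obtain ⟨h12a, h12b⟩ := h12; obtain ⟨h02a, h02b⟩ := h02
  fin_cases m
  · show 0 < S 0 0 - 1/4
    linarith
  · show 0 < S 1 1 - 1/4
    linarith
  · show 0 < S 2 2 - 1/4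
    linarith
  · show 0 < 1/8 + (25/24) * S 0 1
    linarith
  · show 0 < 1/8 - (25/24) * S 0 1
    linarith
  · show 0 < 1/8 + (25/24) * S 1 2
    linarith
  · show 0 < 1/8 - (25/24) * S 1 2
    linarith
  · show 0 < 1/8 + (25/24) * S 0 2
    linarith
  · show 0 < 1/8 - (25/24) * S 0 2
    linarith

lemma contDiff_entry {n : WithTop ℕ∞} (i j : Fin 3) : ContDiff ℝ n (fun S : Fin 3 → Fin 3 → ℝ => S i j) :=
  (((ContinuousLinearMap.proj j : (Fin 3 → ℝ) →L[ℝ] ℝ).comp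
    (ContinuousLinearMap.proj i : (Fin 3 → Fin 3 → ℝ) →L[ℝ] (Fin 3 → ℝ)))).contDiff

lemma cA_contDiff {n : WithTop ℕ∞} (m : Fin 9) : ContDiff ℝ n (cA m) := by
  fin_cases m
  · show ContDiff ℝ n (fun S : Fin 3 → Fin 3 → ℝ => S 0 0 - 1/4)
    exact (contDiff_entry 0 0).sub contDiff_const
  · show ContDiff ℝ n (fun S : Fin 3 → Fin 3 → ℝ => S 1 1 - 1/4)
    exact (contDiff_entry 1 1).sub contDiff_const
  · show ContDiff ℝ n (fun S : Fin 3 → Fin 3 → ℝ => S 2 2 - 1/4)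
    exact (contDiff_entry 2 2).sub contDiff_const
  · show ContDiff ℝ n (fun S : Fin 3 → Fin 3 → ℝ => 1/8 + (25/24) * S 0 1)
    exact contDiff_const.add (contDiff_const.mul (contDiff_entry 0 1))
  · show ContDiff ℝ n (fun S : Fin 3 → Fin 3 → ℝ => 1/8 - (25/24) * S 0 1)
    exact contDiff_const.sub (contDiff_const.mul (contDiff_entry 0 1))
  · show ContDiff ℝ n (fun S : Fin 3 → Fin 3 → ℝ => 1/8 + (25/24) * S 1 2)
    exact contDiff_const.add (contDiff_const.mul (contDiff_entry 1 2))
  · show ContDiff ℝ n (fun S : Fin 3 → Fin 3 → ℝ => 1/8 - (25/24) * S 1 2)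
    exact contDiff_const.sub (contDiff_const.mul (contDiff_entry 1 2))
  · show ContDiff ℝ n (fun S : Fin 3 → Fin 3 → ℝ => 1/8 + (25/24) * S 0 2)
    exact contDiff_const.add (contDiff_const.mul (contDiff_entry 0 2))
  · show ContDiff ℝ n (fun S : Fin 3 → Fin 3 → ℝ => 1/8 - (25/24) * S 0 2)
    exact contDiff_const.sub (contDiff_const.mul (contDiff_entry 0 2))

end GeomAux

/-- **Geometric Lemma.** There exist a finite set `Λ ⊂ 𝕊² ∩ ℚ³`, for each `k ∈ Λ` an
orthonormal basis `(k, k₁ k, k₂ k)` of `ℝ³` with rational entries, a constant `ε_u > 0`,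
and smooth positive functions `γ k` on the ball `B_{ε_u}(Id)` of symmetric 3×3 matrices,
such that every symmetric `S` with `‖S − Id‖ ≤ ε_u` satisfies
`S = Σ_{k∈Λ} (γ k S)² (k₁ k) ⊗ (k₁ k)`. -/
theorem geometric_lemma :
    ∃ (Λ : Finset (EuclideanSpace ℝ (Fin 3)))
      (k₁ k₂ : EuclideanSpace ℝ (Fin 3) → EuclideanSpace ℝ (Fin 3))
      (εu : ℝ) (γ : EuclideanSpace ℝ (Fin 3) → (Fin 3 → Fin 3 → ℝ) → ℝ),
      0 < εu ∧
      (∀ k ∈ Λ,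
        ‖k‖ = 1 ∧ ‖k₁ k‖ = 1 ∧ ‖k₂ k‖ = 1 ∧
        ⟪k, k₁ k⟫ = 0 ∧ ⟪k, k₂ k⟫ = 0 ∧ ⟪k₁ k, k₂ k⟫ = 0 ∧
        (∀ i, ∃ q : ℚ, k i = (q : ℝ)) ∧
        (∀ i, ∃ q : ℚ, k₁ k i = (q : ℝ)) ∧
        (∀ i, ∃ q : ℚ, k₂ k i = (q : ℝ))) ∧
      (∀ k ∈ Λ, ContDiffOn ℝ (⊤ : ℕ∞) (γ k) (matBall εu) ∧
        ∀ S ∈ matBall εu, 0 < γ k S) ∧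
      (∀ S : Fin 3 → Fin 3 → ℝ, (∀ i j, S i j = S j i) → S ∈ matBall εu →
        ∀ i j, S i j = ∑ k ∈ Λ, (γ k S) ^ 2 * (k₁ k i * k₁ k j)) := by
  classical
  refine ⟨Finset.image vA Finset.univ, fun k => wA (sel k), fun k => uA (sel k), 1/100,
    fun k S => Real.sqrt (cA (sel k) S), by norm_num, ?_, ?_, ?_⟩
  · rintro k hk
    obtain ⟨m, -, rfl⟩ := Finset.mem_image.mp hk
    simp only [sel_eval]
    refine ⟨?_, ?_, ?_, ?_, ?_, ?_,
      fun i => ⟨(Zq m i : ℚ)/5, by push_cast [vA, PiLp.toLp_apply]; ring⟩,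
      fun i => ⟨(Wz m i : ℚ)/5, by push_cast [wA, PiLp.toLp_apply]; ring⟩,
      fun i => ⟨(Uz m i : ℚ)/5, by push_cast [uA, PiLp.toLp_apply]; ring⟩⟩ <;>
    fin_cases m <;>
    first
      | (rw [EuclideanSpace.norm_eq]
         norm_num [vA, wA, uA, Zq, Wz, Uz, PiLp.toLp_apply, Matrix.cons_val_two, Matrix.tail_cons, Matrix.head_cons, Fin.sum_univ_three, Real.norm_eq_abs, sq_abs,
           Real.sqrt_eq_one])
      | (rw [PiLp.inner_apply]
         norm_num [vA, wA, uA, Zq, Wz, Uz, PiLp.toLp_apply, Matrix.cons_val_two, Matrix.tail_cons, Matrix.head_cons, Fin.sum_univ_three, RCLike.inner_apply,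
           conj_trivial])
  · rintro k hk
    obtain ⟨m, -, rfl⟩ := Finset.mem_image.mp hk
    simp only [sel_eval]
    refine ⟨(cA_contDiff m).contDiffOn.sqrt (fun S hS => (cA_pos hS m).ne'), ?_⟩
    intro S hS
    exact Real.sqrt_pos.mpr (cA_pos hS m)
  · intro S hsym hS i j
    rw [Finset.sum_image (fun a _ b _ h => vA_inj h)]
    simp only [sel_eval]
    have hsq : ∀ m : Fin 9, Real.sqrt (cA m S) ^ 2 = cA m S :=
      fun m => Real.sq_sqrt (cA_pos hS m).le
    simp only [hsq]
    have e00 : S 0 0 = S 0 0 := rfl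
    have h10 := hsym 1 0
    have h20 := hsym 2 0
    have h21 := hsym 2 1
    fin_cases i <;> fin_cases j <;>
      · simp only [Fin.sum_univ_succ, Fin.sum_univ_zero, add_zero, cA, wA, Wz, PiLp.toLp_apply,
          Matrix.cons_val_zero, Matrix.cons_val_one, Matrix.cons_val_succ,
          Matrix.cons_val_two, Matrix.head_cons, Matrix.tail_cons,
          show ((⟨0, by omega⟩ : Fin 3)) = 0 from rfl,
          show ((⟨1, by omega⟩ : Fin 3)) = 1 from rfl,
          show ((⟨2, by omega⟩ : Fin 3)) = 2 from rfl]
        push_cast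
        ring_nf
        try linarith [hsym 1 0, hsym 2 0, hsym 2 1]
end

section
/- (Smallness criterion via cutoff) Let χ : [0,∞) → ℝ be a smooth function with χ(z) = 1 for 0 ≤ z ≤ 1, χ(z) = z for z ≥ 2, and z/2 ≤ χ(z) ≤ 2z for z ∈ (1,2). Then for any symmetric matrix-valued function R and any constant c > 0, the function ϱ = 2 ε^{−1} c χ(|R|/c) satisfies: (i) |R/ϱ| ≤ ε pointwise, (ii) ϱ ≥ ε^{−1} c pointwise, and (iii) for every p ∈ [1,∞], ‖ϱ‖_{L^p} ≤ C ε^{−1}(c |domain|^{1/p} + ‖R‖_{L^p}) for a universal constant C. -/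
open MeasureTheory

/-- **Smallness criterion via cutoff.** Let `χ : [0,∞) → ℝ` be smooth with `χ(z) = 1` on
`[0,1]`, `χ(z) = z` for `z ≥ 2` and `z/2 ≤ χ(z) ≤ 2z` on `(1,2)`.  Then there is a universal
constant `C` such that for any `ε > 0`, `c > 0`, any finite measure space `(Ω, μ)` and any
(matrix-valued) function `R` on `Ω`, the function `ϱ = 2 ε⁻¹ c χ(|R|/c)` satisfies
(i) `|R|/ϱ ≤ ε`, (ii) `ϱ ≥ ε⁻¹ c`, and (iii) `‖ϱ‖_{L^p} ≤ C ε⁻¹ (c μ(Ω)^{1/p} + ‖R‖_{L^p})`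
for every `p ∈ [1,∞]`. -/
theorem cutoff_smallness_criterion :
    ∃ C : ℝ, 0 < C ∧
    ∀ (χ : ℝ → ℝ),
      ContDiffOn ℝ (⊤ : ℕ∞) χ (Set.Ici 0) →
      (∀ z ∈ Set.Icc (0 : ℝ) 1, χ z = 1) →
      (∀ z : ℝ, 2 ≤ z → χ z = z) →
      (∀ z ∈ Set.Ioo (1 : ℝ) 2, z / 2 ≤ χ z ∧ χ z ≤ 2 * z) →
      ∀ {Ω : Type} [inst : MeasurableSpace Ω] (μ : Measure Ω), IsFiniteMeasure μ →
      ∀ {E : Type} [instE : NormedAddCommGroup E] (R : Ω → E) (ε c : ℝ), 0 < ε → 0 < c →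
        (∀ x, ‖R x‖ / (2 * ε⁻¹ * c * χ (‖R x‖ / c)) ≤ ε) ∧
        (∀ x, ε⁻¹ * c ≤ 2 * ε⁻¹ * c * χ (‖R x‖ / c)) ∧
        (∀ p : ENNReal, 1 ≤ p →
          eLpNorm (fun x => 2 * ε⁻¹ * c * χ (‖R x‖ / c)) p μ ≤
            ENNReal.ofReal (C * ε⁻¹) *
              (ENNReal.ofReal c * (μ Set.univ) ^ (p⁻¹.toReal) +
                eLpNorm R p μ)) := by
  refine ⟨4, by norm_num, ?_⟩
  intro χ _hsmooth h1 h2 h12 Ω _inst μ _hfin E _instE R ε c hε hc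
  -- basic properties of χ on [0,∞)
  have hχhalf : ∀ z : ℝ, 0 ≤ z → (1 : ℝ) / 2 ≤ χ z := by
    intro z hz
    rcases le_or_gt z 1 with h | h
    · rw [h1 z ⟨hz, h⟩]; norm_num
    · rcases lt_or_ge z 2 with h' | h'
      · have := (h12 z ⟨h, h'⟩).1; linarith
      · rw [h2 z h']; linarith
  have hχz : ∀ z : ℝ, 0 ≤ z → z ≤ 2 * χ z := by
    intro z hz
    rcases le_or_gt z 1 with h | h
    · rw [h1 z ⟨hz, h⟩]; linarith
    · rcases lt_or_ge z 2 with h' | h'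
      · have := (h12 z ⟨h, h'⟩).1; linarith
      · rw [h2 z h']; linarith
  have hχub : ∀ z : ℝ, 0 ≤ z → χ z ≤ max 1 (2 * z) := by
    intro z hz
    rcases le_or_gt z 1 with h | h
    · rw [h1 z ⟨hz, h⟩]; exact le_max_left _ _
    · rcases lt_or_ge z 2 with h' | h'
      · exact le_trans (h12 z ⟨h, h'⟩).2 (le_max_right _ _)
      · rw [h2 z h']; exact le_trans (by linarith) (le_max_right _ _)
  have hεinv : (0 : ℝ) < ε⁻¹ := inv_pos.mpr hε
  set ϱ : Ω → ℝ := fun x => 2 * ε⁻¹ * c * χ (‖R x‖ / c) with hϱ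
  have hznn : ∀ x : Ω, (0 : ℝ) ≤ ‖R x‖ / c := fun x => div_nonneg (norm_nonneg _) hc.le
  have hlb : ∀ x, ε⁻¹ * c ≤ ϱ x := by
    intro x
    have h2c : (0:ℝ) ≤ 2 * ε⁻¹ * c := by positivity
    have h := mul_le_mul_of_nonneg_left (hχhalf _ (hznn x)) h2c
    calc ε⁻¹ * c = 2 * ε⁻¹ * c * (1 / 2) := by ring
      _ ≤ 2 * ε⁻¹ * c * χ (‖R x‖ / c) := h
      _ = ϱ x := rfl
  have hϱpos : ∀ x, (0 : ℝ) < ϱ x := fun x => lt_of_lt_of_le (by positivity) (hlb x)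
  refine ⟨?_, hlb, ?_⟩
  · -- (i)
    intro x
    rw [div_le_iff₀ (hϱpos x)]
    have hz := hχz _ (hznn x)
    have : ‖R x‖ ≤ 2 * c * χ (‖R x‖ / c) := by
      have : ‖R x‖ / c * c ≤ 2 * χ (‖R x‖ / c) * c :=
        mul_le_mul_of_nonneg_right hz hc.le
      rw [div_mul_cancel₀ _ hc.ne'] at this
      linarith
    calc ‖R x‖ ≤ 2 * c * χ (‖R x‖ / c) := this
      _ = ε * (2 * ε⁻¹ * c * χ (‖R x‖ / c)) := by
          field_simp
      _ = ε * ϱ x := rfl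
  · -- (iii)
    intro p hp
    -- pointwise bound : ϱ x ≤ max (2ε⁻¹c) (4ε⁻¹‖R x‖)
    have hub : ∀ x, ϱ x ≤ max (2 * ε⁻¹ * c) (4 * ε⁻¹ * ‖R x‖) := by
      intro x
      have h := hχub _ (hznn x)
      rcases le_max_iff.mp h with h' | h'
      · refine le_max_of_le_left ?_
        calc ϱ x = 2 * ε⁻¹ * c * χ (‖R x‖ / c) := rfl
          _ ≤ 2 * ε⁻¹ * c * 1 := mul_le_mul_of_nonneg_left h' (by positivity)
          _ = 2 * ε⁻¹ * c := by ring
      · refine le_max_of_le_right ?_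
        have : 2 * ε⁻¹ * c * χ (‖R x‖ / c) ≤ 2 * ε⁻¹ * c * (2 * (‖R x‖ / c)) := by
          apply mul_le_mul_of_nonneg_left h' (by positivity)
        calc ϱ x ≤ 2 * ε⁻¹ * c * (2 * (‖R x‖ / c)) := this
          _ = 4 * ε⁻¹ * ‖R x‖ := by field_simp; ring
    set a : ENNReal := ENNReal.ofReal (2 * ε⁻¹ * c) with ha
    set b : ENNReal := ENNReal.ofReal (4 * ε⁻¹) with hb
    have hbtop : b ≠ ⊤ := ENNReal.ofReal_ne_top
    -- enorm bounds
    have hptw : ∀ x, (‖ϱ x‖₊ : ENNReal) ≤ max a (b * (‖R x‖₊ : ENNReal)) := by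
      intro x
      have hnorm : (‖ϱ x‖₊ : ENNReal) = ENNReal.ofReal (ϱ x) := by
        rw [← enorm_eq_nnnorm, ← ofReal_norm, Real.norm_of_nonneg (hϱpos x).le]
      rw [hnorm]
      rcases le_max_iff.mp (hub x) with h | h
      · exact le_max_of_le_left (ENNReal.ofReal_le_ofReal h)
      · refine le_max_of_le_right ?_
        calc ENNReal.ofReal (ϱ x) ≤ ENNReal.ofReal (4 * ε⁻¹ * ‖R x‖) :=
              ENNReal.ofReal_le_ofReal h
          _ = b * (‖R x‖₊ : ENNReal) := by
              rw [ENNReal.ofReal_mul (by positivity), ofReal_norm, enorm_eq_nnnorm]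
    rcases eq_or_ne p ⊤ with rfl | hptop
    · -- p = ∞
      simp only [eLpNorm_exponent_top, eLpNormEssSup]
      set L : ENNReal := essSup (fun x => (‖R x‖₊ : ENNReal)) μ with hL
      have hae : ∀ᵐ x ∂μ, (‖ϱ x‖₊ : ENNReal) ≤ a + b * L := by
        filter_upwards [ENNReal.ae_le_essSup (fun x => ((‖R x‖₊ : ENNReal)))] with x hx
        refine le_trans (hptw x) (max_le (le_add_of_le_left le_rfl) ?_)
        exact le_add_of_le_right (mul_le_mul_right hx _)
      have hess : essSup (fun x => (‖ϱ x‖₊ : ENNReal)) μ ≤ a + b * L :=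
        essSup_le_of_ae_le _ hae
      refine hess.trans ?_
      have hp0 : ((⊤ : ENNReal))⁻¹.toReal = 0 := by simp
      rw [hp0, ENNReal.rpow_zero, mul_one, mul_add]
      refine add_le_add ?_ le_rfl
      rw [← ENNReal.ofReal_mul (by positivity)]
      apply ENNReal.ofReal_le_ofReal; nlinarith
    · -- p finite
      have hp0 : p ≠ 0 := by intro h; rw [h] at hp; simp at hp
      set q : ℝ := p.toReal with hqdef
      have hq1 : 1 ≤ q := by
        rw [hqdef, ← ENNReal.toReal_one]
        exact ENNReal.toReal_mono hptop hp
      have hq0 : 0 < q := lt_of_lt_of_le one_pos hq1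
      rw [eLpNorm_eq_lintegral_rpow_enorm_toReal hp0 hptop,
        eLpNorm_eq_lintegral_rpow_enorm_toReal hp0 hptop]
      simp only [enorm_eq_nnnorm]
      have hptw2 : ∀ x, (‖ϱ x‖₊ : ENNReal) ^ q ≤ a ^ q + b ^ q * (‖R x‖₊ : ENNReal) ^ q := by
        intro x
        rcases le_max_iff.mp (hptw x) with h | h
        · exact le_add_of_le_left (ENNReal.rpow_le_rpow h hq0.le)
        · refine le_add_of_le_right ?_
          calc (‖ϱ x‖₊ : ENNReal) ^ q ≤ (b * (‖R x‖₊ : ENNReal)) ^ q :=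
            ENNReal.rpow_le_rpow h hq0.le
            _ = b ^ q * (‖R x‖₊ : ENNReal) ^ q := ENNReal.mul_rpow_of_nonneg _ _ hq0.le
      have hint : (∫⁻ x, (‖ϱ x‖₊ : ENNReal) ^ q ∂μ) ≤
          a ^ q * μ Set.univ + b ^ q * ∫⁻ x, (‖R x‖₊ : ENNReal) ^ q ∂μ := by
        calc (∫⁻ x, (‖ϱ x‖₊ : ENNReal) ^ q ∂μ)
            ≤ ∫⁻ x, (a ^ q + b ^ q * (‖R x‖₊ : ENNReal) ^ q) ∂μ := lintegral_mono hptw2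
          _ = a ^ q * μ Set.univ + ∫⁻ x, b ^ q * (‖R x‖₊ : ENNReal) ^ q ∂μ := by
              rw [lintegral_add_left measurable_const, lintegral_const]
          _ = a ^ q * μ Set.univ + b ^ q * ∫⁻ x, (‖R x‖₊ : ENNReal) ^ q ∂μ := by
              rw [lintegral_const_mul' _ _ (ENNReal.rpow_ne_top_of_nonneg hq0.le hbtop)]
      have hmono := ENNReal.rpow_le_rpow hint (by positivity : (0:ℝ) ≤ 1 / q)
      refine hmono.trans ?_
      have hsub := ENNReal.rpow_add_le_add_rpow (a ^ q * μ Set.univ)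
        (b ^ q * ∫⁻ x, (‖R x‖₊ : ENNReal) ^ q ∂μ) (by positivity : (0:ℝ) ≤ 1/q)
        (by rw [div_le_one hq0]; exact hq1)
      refine hsub.trans ?_
      have hpow : ∀ u v : ENNReal, u ≠ ⊤ → (u ^ q * v) ^ (1/q) = u * v ^ (1/q) := by
        intro u v hu
        rw [ENNReal.mul_rpow_of_nonneg _ _ (by positivity : (0:ℝ) ≤ 1/q),
          ← ENNReal.rpow_mul, mul_one_div, div_self hq0.ne', ENNReal.rpow_one]
      rw [hpow a _ ENNReal.ofReal_ne_top, hpow b _ hbtop]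
      have hinv : p⁻¹.toReal = 1 / q := by
        rw [ENNReal.toReal_inv, hqdef, one_div]
      rw [hinv, mul_add, ← mul_assoc, ← ENNReal.ofReal_mul (by positivity)]
      refine add_le_add ?_ le_rfl
      exact mul_le_mul_left (ENNReal.ofReal_le_ofReal (by nlinarith)) _
end
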